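/- Fix integers k ≥ 2 and s with s > k² − k + 1, shifts θ₁,…,θ_s ∈ (0,1), and 0 < η ≤ 1. Let N(τ) count solutions in positive integers of |Σ_{i=1}^s (x_i−θ_i)^k − τ| < η, and let N*(τ) count those solutions additionally satisfying x_i ≤ τ^{1/k} for all i. Then N(τ) − N*(τ) ≪ τ^{(s−1)(k−1)/k²}, which is o(τ^{s/k−1}). -/
import Mathlib


open Finset Filter

/-- `N(τ)`: the number of solutions in positive integers of
`|Σ (x_i − θ_i)^k − τ| < η`. -/
noncomputable def Ncount (k s : ℕ) (θ : Fin s → ℝ) (η τ : ℝ) : ℕ :=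
  Nat.card {x : Fin s → ℕ // (∀ i, 1 ≤ x i) ∧
    |(∑ i, ((x i : ℝ) - θ i) ^ k) - τ| < η}

/-- `N*(τ)`: solutions additionally satisfying `x_i ≤ τ^{1/k}` for all `i`. -/
noncomputable def Nstar (k s : ℕ) (θ : Fin s → ℝ) (η τ : ℝ) : ℕ :=
  Nat.card {x : Fin s → ℕ // (∀ i, 1 ≤ x i ∧ (x i : ℝ) ≤ τ ^ ((1 : ℝ) / k)) ∧
    |(∑ i, ((x i : ℝ) - θ i) ^ k) - τ| < η}

lemma aux_pow_sub (a : ℝ) (ha : 1 ≤ a) : ∀ n : ℕ, a ^ n - (a - 1) ^ n ≤ n * a ^ (n - 1) := by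
  intro n
  induction n with
  | zero => simp
  | succ m ih =>
    have h1 : (0:ℝ) ≤ a - 1 := by linarith
    cases m with
    | zero => simp
    | succ p =>
      have hp : a ^ (p + 1) - (a - 1) ^ (p + 1) ≤ ((p:ℝ) + 1) * a ^ p := by
        have := ih; push_cast at this; simpa using this
      have h3 : (a - 1) ^ (p + 1) ≤ a ^ (p + 1) := pow_le_pow_left₀ h1 (by linarith) _
      have hmul := mul_le_mul_of_nonneg_left hp (show (0:ℝ) ≤ a by linarith)
      have hs : a ^ (p + 1) = a ^ p * a := pow_succ a p
      have this2 : a ^ (p + 2) - (a - 1) ^ (p + 2) ≤ ((p:ℝ) + 2) * a ^ (p + 1) := by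
        have key : a ^ (p + 2) - (a - 1) ^ (p + 2)
            = a * (a ^ (p + 1) - (a - 1) ^ (p + 1)) + (a - 1) ^ (p + 1) := by ring
        rw [key]; nlinarith
      push_cast
      show a ^ (p + 1 + 1) - (a - 1) ^ (p + 1 + 1) ≤ ((p:ℝ) + 1 + 1) * a ^ (p + 1 + 1 - 1)
      have e1 : a ^ (p + 1 + 1) = a ^ (p + 2) := by ring
      have e2 : (a - 1) ^ (p + 1 + 1) = (a - 1) ^ (p + 2) := by ring
      have e3 : a ^ (p + 1 + 1 - 1) = a ^ (p + 1) := by norm_num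
      rw [e1, e2, e3]; linarith

lemma aux_add_one_pow (a : ℝ) (ha : 0 ≤ a) : ∀ n : ℕ, 1 ≤ n → a ^ n + 1 ≤ (a + 1) ^ n := by
  intro n
  induction n with
  | zero => simp
  | succ m ih =>
    intro _
    cases m with
    | zero => simp
    | succ p =>
      have h := ih (by omega)
      have hpos : (0:ℝ) ≤ a ^ (p+1) := by positivity
      have hs : a ^ (p+1+1) = a ^ (p+1) * a := pow_succ a (p+1)
      calc a ^ (p + 1 + 1) + 1 ≤ (a ^ (p+1) + 1) * (a + 1) := by nlinarith
        _ ≤ (a + 1) ^ (p+1) * (a + 1) := by nlinarith [pow_nonneg (by linarith : (0:ℝ) ≤ a + 1) (p+1)]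
        _ = (a + 1) ^ (p + 1 + 1) := by ring


set_option maxHeartbeats 1000000 in
lemma count_bound (k s : ℕ) (hk : 2 ≤ k) (hs1 : 1 ≤ s) (θ : Fin s → ℝ)
    (hθ : ∀ i, θ i ∈ Set.Ioo (0:ℝ) 1) (η : ℝ) (hη0 : 0 < η) (hη1 : η ≤ 1)
    (τ : ℝ) (hτ : 1 ≤ τ) :
    Nstar k s θ η τ ≤ Ncount k s θ η τ ∧
    (Ncount k s θ η τ : ℝ) - Nstar k s θ η τ ≤
      (3 * s * (k+3)^(s-1) : ℝ) * τ ^ (((s:ℝ)-1) * ((k:ℝ)-1)/(k:ℝ)^2) := by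
  classical
  have hτ0 : (0:ℝ) < τ := by linarith
  have hk0 : (0:ℝ) < k := by exact_mod_cast Nat.lt_of_lt_of_le two_pos hk
  have hk2 : (2:ℝ) ≤ k := by exact_mod_cast hk
  set β : ℝ := ((k:ℝ)-1)/(k:ℝ)^2 with hβ
  set t : ℝ := τ ^ ((1:ℝ)/k) with ht
  have ht1 : 1 ≤ t := by
    rw [ht]
    calc (1:ℝ) = 1 ^ ((1:ℝ)/k) := (Real.one_rpow _).symm
      _ ≤ τ ^ ((1:ℝ)/k) := Real.rpow_le_rpow zero_le_one hτ (by positivity)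
  have ht0 : 0 < t := by linarith
  have htk : t ^ k = τ := by
    rw [ht, ← Real.rpow_natCast (τ ^ ((1:ℝ)/k)) k, ← Real.rpow_mul hτ0.le]
    rw [one_div_mul_cancel (by positivity : (k:ℝ) ≠ 0), Real.rpow_one]
  have hβ0 : 0 ≤ β := by
    rw [hβ]; apply div_nonneg (by linarith) (by positivity)
  have hτβ1 : 1 ≤ τ ^ β := Real.one_le_rpow hτ hβ0
  set b : ℕ := ⌊t⌋₊ + 1 with hb
  set M : ℕ := ⌈((k:ℝ)+2) * τ ^ β⌉₊ with hM
  have htb : t < b := by rw [hb]; push_cast; exact Nat.lt_floor_add_one t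
  have hMr : ((k:ℝ)+2) * τ ^ β ≤ M := Nat.le_ceil _
  have hMle : (M:ℝ) ≤ ((k:ℝ)+3) * τ ^ β := by
    have h1 : (M:ℝ) < ((k:ℝ)+2) * τ ^ β + 1 :=
      Nat.ceil_lt_add_one (by positivity)
    nlinarith
  -- the sets
  set Sol : Set (Fin s → ℕ) := {x | (∀ i, 1 ≤ x i) ∧
    |(∑ i, ((x i : ℝ) - θ i) ^ k) - τ| < η} with hSol
  set A : Set (Fin s → ℕ) := {x | (∀ i, 1 ≤ x i ∧ (x i : ℝ) ≤ τ ^ ((1:ℝ)/k)) ∧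
    |(∑ i, ((x i : ℝ) - θ i) ^ k) - τ| < η} with hA
  have hNc : Ncount k s θ η τ = Sol.ncard := Nat.card_coe_set_eq Sol
  have hNs : Nstar k s θ η τ = A.ncard := Nat.card_coe_set_eq A
  have hAS : A ⊆ Sol := by
    intro x hx
    exact ⟨fun i => (hx.1 i).1, hx.2⟩
  -- basic facts about solutions
  have sol_facts : ∀ x ∈ Sol, (∀ i, 0 < (x i : ℝ) - θ i) ∧
      (∑ i, ((x i : ℝ) - θ i) ^ k) < τ + 1 ∧
      (∀ i, ((x i : ℝ) - θ i) ^ k ≤ ∑ j, ((x j : ℝ) - θ j) ^ k) := by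
    intro x hx
    obtain ⟨hx1, hx2⟩ := hx
    have hpos : ∀ i, 0 < (x i : ℝ) - θ i := by
      intro i
      have := (hθ i).2
      have : (1:ℝ) ≤ x i := by exact_mod_cast hx1 i
      nlinarith [(hθ i).2]
    refine ⟨hpos, ?_, ?_⟩
    · have := abs_lt.1 hx2
      linarith [this.2]
    · intro i
      apply Finset.single_le_sum (fun j _ => le_of_lt (pow_pos (hpos j) k)) (mem_univ i)
  -- A is finite
  have hAfin : A.Finite := by
    apply Set.Finite.subset (Fintype.piFinset (fun _ : Fin s => Finset.Icc 1 b)).finite_toSet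
    intro x hx
    simp only [Fintype.coe_piFinset, Set.mem_pi, Set.mem_univ, forall_true_left, Finset.coe_Icc,
      Set.mem_Icc]
    intro i
    refine ⟨(hx.1 i).1, ?_⟩
    have h1 : (x i : ℝ) ≤ t := (hx.1 i).2
    have : (x i : ℝ) < b := lt_of_le_of_lt h1 htb
    exact_mod_cast this.le
  -- the boxes for the exceptional solutions
  set Pj : Fin s → Finset (Fin s → ℕ) := fun j => Fintype.piFinset
    (fun i => if i = j then Finset.Icc b (b+2) else Finset.Icc 1 M) with hPjdef
  set F : Finset (Fin s → ℕ) := Finset.univ.biUnion Pj with hF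
  have hD : Sol \ A ⊆ ↑F := by
    rintro x ⟨hxSol, hxnA⟩
    obtain ⟨hx1, hx2⟩ := hxSol
    have hex : ∃ j, t < (x j : ℝ) := by
      by_contra h; push_neg at h
      exact hxnA ⟨fun i => ⟨hx1 i, h i⟩, hx2⟩
    obtain ⟨j, hj⟩ := hex
    obtain ⟨hpos, hsum, hterm⟩ := sol_facts x ⟨hx1, hx2⟩
    -- bound on x j
    have hxj_up : (x j : ℝ) < (b:ℝ) + 2 := by
      have h1 : ((x j : ℝ) - θ j) ^ k < (t + 1) ^ k := by
        have := aux_add_one_pow t ht0.le k (by omega)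
        calc ((x j : ℝ) - θ j) ^ k ≤ ∑ i, ((x i : ℝ) - θ i) ^ k := hterm j
          _ < τ + 1 := hsum
          _ = t ^ k + 1 := by rw [htk]
          _ ≤ (t + 1) ^ k := this
      have h2 : (x j : ℝ) - θ j < t + 1 := lt_of_pow_lt_pow_left₀ k (by linarith) h1
      have h3 := (hθ j).2
      have h4 := (hθ j).1
      linarith
    have hxj_lo : (b:ℕ) ≤ x j := by
      have h1 : ((⌊t⌋₊ : ℕ) : ℝ) < (x j : ℝ) := lt_of_le_of_lt (Nat.floor_le ht0.le) hj
      have h2 : (⌊t⌋₊ : ℕ) < x j := by exact_mod_cast h1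
      omega
    -- bound on the other coordinates
    have hxi : ∀ i, i ≠ j → x i ≤ M := by
      intro i hij
      -- the sum minus the j-th term controls the i-th term
      have hsplit : ((x j : ℝ) - θ j) ^ k + ((x i : ℝ) - θ i) ^ k
          ≤ ∑ l, ((x l : ℝ) - θ l) ^ k := by
        rw [← Finset.add_sum_erase _ _ (mem_univ j)]
        have : ((x i : ℝ) - θ i) ^ k ≤ ∑ l ∈ Finset.univ.erase j, ((x l : ℝ) - θ l) ^ k := by
          apply Finset.single_le_sum (fun l _ => le_of_lt (pow_pos (hpos l) k))
          exact Finset.mem_erase.2 ⟨hij, mem_univ i⟩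
        linarith
      have htj : (t - 1) ^ k ≤ ((x j : ℝ) - θ j) ^ k := by
        apply pow_le_pow_left₀ (by linarith)
        have := (hθ j).2; linarith
      have haux := aux_pow_sub t ht1 k
      have htk1 : (1:ℝ) ≤ t ^ (k-1) := one_le_pow₀ ht1
      have hR : ((x i : ℝ) - θ i) ^ k ≤ ((k:ℝ)+1) * t ^ (k-1) := by
        have h1 : ((x i : ℝ) - θ i) ^ k ≤ τ + 1 - (t - 1) ^ k := by linarith
        have h2 : τ + 1 - (t - 1) ^ k ≤ 1 + (k:ℝ) * t ^ (k-1) := by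
          have : t ^ k - (t-1) ^ k ≤ (k:ℝ) * t ^ (k-1) := haux
          rw [htk] at this; linarith
        nlinarith
      -- take k-th roots
      set a : ℝ := (x i : ℝ) - θ i with ha
      have ha0 : 0 < a := hpos i
      have hstep : a ≤ (((k:ℝ)+1) * t ^ (k-1)) ^ ((1:ℝ)/k) := by
        have e1 : (a ^ k) ^ ((1:ℝ)/k) = a := by
          rw [← Real.rpow_natCast a k, ← Real.rpow_mul ha0.le]
          rw [mul_one_div_cancel (by positivity : (k:ℝ) ≠ 0), Real.rpow_one]
        calc a = (a ^ k) ^ ((1:ℝ)/k) := e1.symm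
          _ ≤ (((k:ℝ)+1) * t ^ (k-1)) ^ ((1:ℝ)/k) :=
            Real.rpow_le_rpow (by positivity) hR (by positivity)
      have hsplit2 : (((k:ℝ)+1) * t ^ (k-1)) ^ ((1:ℝ)/k)
          = ((k:ℝ)+1) ^ ((1:ℝ)/k) * (t ^ (k-1)) ^ ((1:ℝ)/k) :=
        Real.mul_rpow (by positivity) (by positivity)
      have hfac1 : ((k:ℝ)+1) ^ ((1:ℝ)/k) ≤ (k:ℝ)+1 := by
        calc ((k:ℝ)+1) ^ ((1:ℝ)/k) ≤ ((k:ℝ)+1) ^ (1:ℝ) :=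
          Real.rpow_le_rpow_of_exponent_le (by linarith) (by
            rw [div_le_one (by positivity)]; linarith)
          _ = (k:ℝ)+1 := Real.rpow_one _
      have hfac2 : (t ^ (k-1)) ^ ((1:ℝ)/k) = τ ^ β := by
        have e1 : t ^ (k-1) = τ ^ ((1:ℝ)/k * ((k:ℝ)-1)) := by
          rw [ht, ← Real.rpow_natCast (τ ^ ((1:ℝ)/k)) (k-1), ← Real.rpow_mul hτ0.le]
          congr 1
          rw [Nat.cast_sub (by omega : 1 ≤ k)]
          norm_num
        have e2 : (1:ℝ)/(k:ℝ) * ((k:ℝ)-1) * ((1:ℝ)/(k:ℝ)) = β := by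
          rw [hβ]; ring
        rw [e1, ← Real.rpow_mul hτ0.le, e2]
      have hxiR : (x i : ℝ) ≤ ((k:ℝ)+2) * τ ^ β := by
        have hθi := (hθ i).2
        have h1 : a ≤ ((k:ℝ)+1) * τ ^ β := by
          rw [hsplit2, hfac2] at hstep
          calc a ≤ ((k:ℝ)+1) ^ ((1:ℝ)/k) * τ ^ β := hstep
            _ ≤ ((k:ℝ)+1) * τ ^ β := by
              apply mul_le_mul_of_nonneg_right hfac1 (by positivity)
        have : (x i : ℝ) = a + θ i := by rw [ha]; ring
        rw [this]; nlinarith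
      have : (x i : ℝ) ≤ (M:ℝ) := le_trans hxiR hMr
      exact_mod_cast this
    -- conclude membership in the box
    have hmem : x ∈ Pj j := by
      rw [hPjdef]
      simp only [Fintype.mem_piFinset]
      intro i
      rcases eq_or_ne i j with hij | hij
      · rw [hij, if_pos rfl, Finset.mem_Icc]
        have hlt : x j < b + 2 := by exact_mod_cast hxj_up
        exact ⟨hxj_lo, by omega⟩
      · rw [if_neg hij, Finset.mem_Icc]
        exact ⟨hx1 i, hxi i hij⟩
    exact Finset.mem_coe.2 (Finset.mem_biUnion.2 ⟨j, mem_univ j, hmem⟩)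
  -- finiteness and counting
  have hDfin : (Sol \ A).Finite := Set.Finite.subset F.finite_toSet hD
  have hsub : Sol ⊆ A ∪ (Sol \ A) := by
    intro x hx
    by_cases hxA : x ∈ A
    · exact Or.inl hxA
    · exact Or.inr ⟨hx, hxA⟩
  have hSolfin : Sol.Finite := (hAfin.union hDfin).subset hsub
  have hcard1 : Sol.ncard ≤ A.ncard + (Sol \ A).ncard :=
    le_trans (Set.ncard_le_ncard hsub (hAfin.union hDfin)) (Set.ncard_union_le _ _)
  have hcard2 : (Sol \ A).ncard ≤ F.card := by
    calc (Sol \ A).ncard ≤ (↑F : Set (Fin s → ℕ)).ncard :=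
      Set.ncard_le_ncard hD F.finite_toSet
      _ = F.card := Set.ncard_coe_finset F
  have hPjcard : ∀ j, (Pj j).card = 3 * M ^ (s - 1) := by
    intro j
    rw [hPjdef]
    rw [Fintype.card_piFinset]
    have e1 : ∀ i : Fin s, (if i = j then Finset.Icc b (b+2) else Finset.Icc 1 M).card
        = if i = j then 3 else M := by
      intro i
      by_cases hij : i = j <;> simp [hij, Nat.card_Icc] <;> omega
    rw [Finset.prod_congr rfl (fun i _ => e1 i)]
    rw [← Finset.mul_prod_erase Finset.univ _ (mem_univ j), if_pos rfl]
    congr 1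
    rw [Finset.prod_congr rfl (fun i hi => if_neg (Finset.mem_erase.1 hi).1)]
    rw [Finset.prod_const, Finset.card_erase_of_mem (mem_univ j), Finset.card_univ,
      Fintype.card_fin]
  have hFcard : F.card ≤ s * (3 * M ^ (s - 1)) := by
    refine le_trans (Finset.card_biUnion_le) ?_
    rw [Finset.sum_congr rfl (fun j _ => hPjcard j), Finset.sum_const, Finset.card_univ,
      Fintype.card_fin, smul_eq_mul]
  constructor
  · rw [hNc, hNs]
    exact Set.ncard_le_ncard hAS hSolfin
  · rw [hNc, hNs]
    have htotal : Sol.ncard ≤ A.ncard + s * (3 * M ^ (s-1)) := by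
      have := le_trans hcard2 hFcard
      omega
    have hcast : (Sol.ncard : ℝ) - A.ncard ≤ (s : ℝ) * (3 * (M:ℝ) ^ (s-1)) := by
      have : (Sol.ncard : ℝ) ≤ (A.ncard : ℝ) + (s : ℝ) * (3 * (M:ℝ) ^ (s-1)) := by
        exact_mod_cast htotal
      linarith
    refine le_trans hcast ?_
    have hMpow : (M:ℝ) ^ (s-1) ≤ ((k:ℝ)+3) ^ (s-1) * τ ^ (((s:ℝ)-1) * ((k:ℝ)-1)/(k:ℝ)^2) := by
      have h1 : (M:ℝ) ^ (s-1) ≤ (((k:ℝ)+3) * τ ^ β) ^ (s-1) :=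
        pow_le_pow_left₀ (by positivity) hMle _
      have h2 : (((k:ℝ)+3) * τ ^ β) ^ (s-1) = ((k:ℝ)+3) ^ (s-1) * (τ ^ β) ^ (s-1) :=
        mul_pow _ _ _
      have h3 : (τ ^ β) ^ (s-1) = τ ^ (((s:ℝ)-1) * ((k:ℝ)-1)/(k:ℝ)^2) := by
        rw [← Real.rpow_natCast (τ ^ β) (s-1), ← Real.rpow_mul hτ0.le]
        congr 1
        rw [Nat.cast_sub hs1, hβ]
        push_cast
        field_simp
      rw [h2, h3] at h1
      exact h1
    calc (s : ℝ) * (3 * (M:ℝ) ^ (s-1))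
        ≤ (s : ℝ) * (3 * (((k:ℝ)+3) ^ (s-1) * τ ^ (((s:ℝ)-1) * ((k:ℝ)-1)/(k:ℝ)^2))) := by
          apply mul_le_mul_of_nonneg_left _ (by positivity)
          apply mul_le_mul_of_nonneg_left hMpow (by norm_num)
      _ = (3 * s * ((k:ℝ)+3) ^ (s-1)) * τ ^ (((s:ℝ)-1) * ((k:ℝ)-1)/(k:ℝ)^2) := by
          push_cast; ring


theorem truncation_negligible (k s : ℕ) (hk : 2 ≤ k) (hs : k ^ 2 - k + 1 < s)
    (θ : Fin s → ℝ) (hθ : ∀ i, θ i ∈ Set.Ioo (0 : ℝ) 1)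
    (η : ℝ) (hη0 : 0 < η) (hη1 : η ≤ 1) :
    (∃ C > 0, ∀ τ : ℝ, 1 ≤ τ →
      (Ncount k s θ η τ : ℝ) - Nstar k s θ η τ ≤
        C * τ ^ (((s : ℝ) - 1) * ((k : ℝ) - 1) / (k : ℝ) ^ 2)) ∧
    Tendsto (fun τ : ℝ =>
        ((Ncount k s θ η τ : ℝ) - Nstar k s θ η τ) / τ ^ ((s : ℝ) / k - 1))
      atTop (nhds 0) := by
  have hkk : k ≤ k ^ 2 := Nat.le_self_pow two_ne_zero k
  have hs1 : 1 ≤ s := by omega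
  have hs0 : (0:ℝ) < s := by exact_mod_cast (by omega : 0 < s)
  have hk2 : (2:ℝ) ≤ k := by exact_mod_cast hk
  have hk0 : (0:ℝ) < k := by linarith
  have hsR : (k:ℝ)^2 - (k:ℝ) + 1 < (s:ℝ) := by
    have h2 : ((k^2 - k + 1 : ℕ):ℝ) < (s:ℝ) := by exact_mod_cast hs
    rwa [Nat.cast_add, Nat.cast_sub hkk, Nat.cast_pow, Nat.cast_one] at h2
  set α : ℝ := ((s:ℝ) - 1) * ((k:ℝ) - 1) / (k:ℝ) ^ 2 with hα
  set e : ℝ := (s:ℝ)/(k:ℝ) - 1 with he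
  set C : ℝ := 3 * (s:ℝ) * ((k:ℝ)+3)^(s-1) with hC
  have hC0 : 0 < C := by positivity
  have hbound : ∀ τ : ℝ, 1 ≤ τ →
      (Ncount k s θ η τ : ℝ) - Nstar k s θ η τ ≤ C * τ ^ α := by
    intro τ hτ
    have h := (count_bound k s hk hs1 θ hθ η hη0 hη1 τ hτ).2
    rw [hC, hα]
    exact h
  have hmono : ∀ τ : ℝ, 1 ≤ τ →
      Nstar k s θ η τ ≤ Ncount k s θ η τ := fun τ hτ =>
    (count_bound k s hk hs1 θ hθ η hη0 hη1 τ hτ).1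
  refine ⟨⟨C, hC0, hbound⟩, ?_⟩
  set δ : ℝ := e - α with hδ
  have hδ0 : 0 < δ := by
    have key : δ = ((s:ℝ) + (k:ℝ) - 1 - (k:ℝ)^2)/(k:ℝ)^2 := by
      rw [hδ, he, hα]; field_simp; ring
    rw [key]
    apply div_pos (by linarith) (by positivity)
  have hh : Tendsto (fun τ : ℝ => C * τ ^ (-δ)) atTop (nhds 0) := by
    have := (tendsto_rpow_neg_atTop hδ0).const_mul C
    simpa using this
  apply tendsto_of_tendsto_of_tendsto_of_le_of_le' tendsto_const_nhds hh
  · filter_upwards [eventually_ge_atTop (1:ℝ)] with τ hτ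
    have hτ0 : (0:ℝ) < τ := by linarith
    apply div_nonneg
    · have := hmono τ hτ
      have : (Nstar k s θ η τ : ℝ) ≤ Ncount k s θ η τ := by exact_mod_cast this
      linarith
    · positivity
  · filter_upwards [eventually_ge_atTop (1:ℝ)] with τ hτ
    have hτ0 : (0:ℝ) < τ := by linarith
    have hden : (0:ℝ) < τ ^ e := Real.rpow_pos_of_pos hτ0 e
    have h1 : ((Ncount k s θ η τ : ℝ) - Nstar k s θ η τ) / τ ^ e
        ≤ (C * τ ^ α) / τ ^ e := by
      gcongr
      exact hbound τ hτ
    refine h1.trans_eq ?_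
    rw [mul_div_assoc, ← Real.rpow_sub hτ0]
    congr 1
    rw [hδ]; ring
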